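/- Let R_1, R_2 > 0 with 1 ≤ R_2/R_1 ≤ e^{2ε} for some ε > 0 with e^{2ε} − 1 < 4/9, and set ρ = √2 √(e^{2ε} − 1) R_1. Let Q ∈ ℝ^{n+1} with R_1 ≤ |Q| ≤ R_2 and ν = Q/|Q|. Then for every X ∈ B(Q,ρ) with ⟨X − Q, ν⟩ ≤ −2√2 √(e^{2ε} − 1) ρ, one has |X| < R_1. -/
import Mathlib


open MeasureTheory Metric Set
open scoped RealInnerProductSpace

noncomputable section

private lemma aux_arith (R₁ δ a b c t : ℝ) (hδ0 : 0 < δ) (hsmall : δ < 4 / 9)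
    (hR₁ : 0 < R₁) (hkey : a ^ 2 = b ^ 2 + 2 * (b * t) + c ^ 2)
    (h2 : c ^ 2 < 2 * δ * R₁ ^ 2) (h3 : 2 * (b * t) ≤ -(8 * δ * R₁ ^ 2))
    (h5 : b ^ 2 ≤ ((1 + δ) * R₁) ^ 2) (ha : 0 ≤ a) : a < R₁ := by
  have hsq2 : a ^ 2 < R₁ ^ 2 := by
    nlinarith [mul_pos hR₁ hR₁, mul_pos hδ0 (mul_pos hR₁ hR₁)]
  exact lt_of_pow_lt_pow_left₀ 2 hR₁.le hsq2

theorem stmt11 (n : ℕ) (R₁ R₂ ε ρ : ℝ) (hε : 0 < ε)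
    (hsmall : Real.exp (2 * ε) - 1 < 4 / 9) (hR₁ : 0 < R₁)
    (hratio₁ : 1 ≤ R₂ / R₁) (hratio₂ : R₂ / R₁ ≤ Real.exp (2 * ε))
    (hρ : ρ = Real.sqrt 2 * Real.sqrt (Real.exp (2 * ε) - 1) * R₁)
    (Q : EuclideanSpace ℝ (Fin (n + 1))) (hQ₁ : R₁ ≤ ‖Q‖) (hQ₂ : ‖Q‖ ≤ R₂)
    (ν : EuclideanSpace ℝ (Fin (n + 1))) (hν : ν = ‖Q‖⁻¹ • Q)
    (X : EuclideanSpace ℝ (Fin (n + 1))) (hX : X ∈ ball Q ρ)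
    (hproj : ⟪X - Q, ν⟫ ≤ -(2 * Real.sqrt 2 * Real.sqrt (Real.exp (2 * ε) - 1) * ρ)) :
    ‖X‖ < R₁ := by
  obtain ⟨δ, hδdef⟩ : ∃ δ, Real.exp (2 * ε) - 1 = δ := ⟨_, rfl⟩
  rw [hδdef] at hsmall hρ hproj
  have hδ0 : 0 < δ := by
    have : (1 : ℝ) < Real.exp (2 * ε) := by
      rw [← Real.exp_zero]; exact Real.exp_lt_exp.mpr (by linarith)
    linarith
  have hs2 : Real.sqrt 2 ^ 2 = 2 := Real.sq_sqrt (by norm_num)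
  have hsδ : Real.sqrt δ ^ 2 = δ := Real.sq_sqrt hδ0.le
  have hρ2 : ρ ^ 2 = 2 * δ * R₁ ^ 2 := by
    rw [hρ, mul_pow, mul_pow, hs2, hsδ]
  have hρ0 : 0 < ρ := by
    rw [hρ]
    positivity
  have hQ0 : (0:ℝ) < ‖Q‖ := lt_of_lt_of_le hR₁ hQ₁
  have ht : ⟪X - Q, ν⟫ ≤ -(4 * δ * R₁) := by
    refine hproj.trans (le_of_eq ?_)
    rw [hρ]
    linear_combination (-2 * Real.sqrt δ ^ 2 * R₁) * hs2 + (-4 * R₁) * hsδ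
  have hQ2' : ‖Q‖ ≤ (1 + δ) * R₁ := by
    have h1 : R₂ ≤ Real.exp (2 * ε) * R₁ := by
      rw [div_le_iff₀ hR₁] at hratio₂; linarith
    have h' : Real.exp (2 * ε) = 1 + δ := by linarith
    nlinarith
  have hXQ : ‖X - Q‖ < ρ := by
    rw [mem_ball, dist_eq_norm] at hX; exact hX
  have hinner : ⟪X - Q, Q⟫ = ‖Q‖ * ⟪X - Q, ν⟫ := by
    rw [hν, real_inner_smul_right]
    field_simp
  have hkey : ‖X‖ ^ 2 = ‖Q‖ ^ 2 + 2 * (‖Q‖ * ⟪X - Q, ν⟫) + ‖X - Q‖ ^ 2 := by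
    have h1 : X = Q + (X - Q) := by abel
    calc ‖X‖ ^ 2 = ‖Q + (X - Q)‖ ^ 2 := by rw [← h1]
      _ = ‖Q‖ ^ 2 + 2 * ⟪Q, X - Q⟫ + ‖X - Q‖ ^ 2 := norm_add_sq_real Q (X - Q)
      _ = ‖Q‖ ^ 2 + 2 * (‖Q‖ * ⟪X - Q, ν⟫) + ‖X - Q‖ ^ 2 := by
          rw [real_inner_comm, hinner]
  refine aux_arith R₁ δ ‖X‖ ‖Q‖ ‖X - Q‖ ⟪X - Q, ν⟫ hδ0 hsmall hR₁ hkey ?_ ?_ ?_ (norm_nonneg X)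
  · rw [← hρ2]
    have h0 := norm_nonneg (X - Q)
    nlinarith [hXQ, h0, hρ0]
  · have ha : ‖Q‖ * ⟪X - Q, ν⟫ ≤ ‖Q‖ * (-(4 * δ * R₁)) :=
      mul_le_mul_of_nonneg_left ht hQ0.le
    have h4 : ‖Q‖ * (-(4 * δ * R₁)) ≤ R₁ * (-(4 * δ * R₁)) := by
      apply mul_le_mul_of_nonpos_right hQ₁
      have := mul_pos hδ0 hR₁
      linarith
    have h4' : R₁ * (-(4 * δ * R₁)) = -(4 * δ * R₁ ^ 2) := by ring
    linarith
  · exact pow_le_pow_left₀ (norm_nonneg Q) hQ2' 2
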